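/- If Γ₁ is a safe algorithmic context and the algorithmic typing judgment Γ₁ ⊢ P ▷ Γ₂ is derivable, then dom(Γ₂) = dom(Γ₁) and Γ₂ is also safe. -/

import Mathlib

/-! Qualified session types for the pi calculus (Giunti),
    algorithmic type checking and split-based declarative system. -/

inductive Qual : Type
| lin : Qual
| un : Qual

mutual
inductive PreTy : Type
| recv : Ty → EpTy → PreTy
| send : Ty → EpTy → PreTy
| ende : PreTy
inductive EpTy : Type
| q : Qual → PreTy → EpTy
| var : Nat → EpTy
| mu : EpTy → EpTy
inductive Ty : Type
| ep : EpTy → Ty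
| ch : EpTy → EpTy → Ty
end

mutual
def PreTy.subst : PreTy → Nat → EpTy → PreTy
| .recv T S, n, R => .recv (T.subst n R) (S.subst n R)
| .send T S, n, R => .send (T.subst n R) (S.subst n R)
| .ende, _, _ => .ende
def EpTy.subst : EpTy → Nat → EpTy → EpTy
| .q qu p, n, R => .q qu (p.subst n R)
| .var a, n, R => if a = n then R else .var a
| .mu S, n, R => .mu (S.subst (n+1) R)
def Ty.subst : Ty → Nat → EpTy → Ty
| .ep S, n, R => .ep (S.subst n R)
| .ch S1 S2, n, R => .ch (S1.subst n R) (S2.subst n R)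
end

/-- Equi-recursive unfolding of an end-point type to a head (qualified) form. -/
inductive Unf : EpTy → EpTy → Prop
| refl (q p) : Unf (.q q p) (.q q p)
| mu {S S'} : Unf (S.subst 0 (.mu S)) S' → Unf (.mu S) S'

/-- Algorithmic entries: an end-point type or the void marker. -/
inductive Entry : Type
| ep : EpTy → Entry
| void : Entry

/-- A context entry: a single entry or a channel pair of entries. -/
inductive CEntry : Type
| single : Entry → CEntry
| chan : Entry → Entry → CEntry

def Ty.toC : Ty → CEntry
| .ep S => .single (.ep S)
| .ch S1 S2 => .chan (.ep S1) (.ep S2)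

def unEnd : Entry := .ep (.q .un .ende)

/-- Safety predicate on context entries. -/
inductive SafeC : CEntry → Prop
| single (M) : SafeC (.single M)
| voidL (N) : SafeC (.chan .void N)
| voidR (M) : SafeC (.chan M .void)
| endL (N) : SafeC (.chan unEnd N)
| endR (M) : SafeC (.chan M unEnd)
| linlin {T : Ty} {S1 S2 : EpTy} : SafeC T.toC → SafeC (.chan (.ep S1) (.ep S2)) →
    SafeC (.chan (.ep (.q .lin (.recv T S1))) (.ep (.q .lin (.send T S2))))
| unun {T : Ty} {S1 S2 : EpTy} : SafeC T.toC →
    SafeC (.chan (.ep (.q .un (.recv T S1))) (.ep (.q .un (.send T S2))))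

/-- Unrestricted entries. -/
inductive UnE : Entry → Prop
| void : UnE .void
| un (p) : UnE (.ep (.q .un p))

def UnC : CEntry → Prop
| .single M => UnE M
| .chan M N => UnE M ∧ UnE N

/-- Pi-calculus processes with annotated restriction. -/
inductive Proc : Type
| nil : Proc
| par : Proc → Proc → Proc
| repl : Proc → Proc
| nu : String → Ty → Proc → Proc
| out : String → String → Proc → Proc
| inp : String → String → Proc → Proc

/-- Free variables of a process. -/
def fv : Proc → Set String
| .nil => ∅
| .par P Q => fv P ∪ fv Q
| .repl P => fv P
| .nu x _ P => fv P \ {x}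
| .out x y P => {x} ∪ ({y} ∪ fv P)
| .inp x y P => {x} ∪ (fv P \ {y})

/-- Algorithmic typing contexts. -/
abbrev Ctx := String → Option CEntry

def Ctx.upd (Γ : Ctx) (x : String) (E : CEntry) : Ctx :=
  fun y => if y = x then some E else Γ y

def Ctx.del (Γ : Ctx) (x : String) : Ctx :=
  fun y => if y = x then none else Γ y

def SafeCtx (Γ : Ctx) : Prop := ∀ x E, Γ x = some E → SafeC E
def UnCtx (Γ : Ctx) : Prop := ∀ x E, Γ x = some E → UnC E

/-- Algorithmic value-checking judgment Γ ⊢ x : T ▷ Γ'. -/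
inductive CheckVar : Ctx → String → Ty → Ctx → Prop
| vL {Γ : Ctx} {x p} : Γ x = some (.single (.ep (.q .lin p))) →
    CheckVar Γ x (.ep (.q .lin p)) (Γ.upd x (.single .void))
| vU {Γ : Ctx} {x p} : Γ x = some (.single (.ep (.q .un p))) →
    CheckVar Γ x (.ep (.q .un p)) Γ
| vLLl {Γ : Ctx} {x p1 p2} : Γ x = some (.chan (.ep (.q .lin p1)) (.ep (.q .lin p2))) →
    CheckVar Γ x (.ch (.q .lin p1) (.q .lin p2)) (Γ.upd x (.chan .void .void))
| vLLr {Γ : Ctx} {x p1 p2} : Γ x = some (.chan (.ep (.q .lin p1)) (.ep (.q .lin p2))) →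
    CheckVar Γ x (.ch (.q .lin p2) (.q .lin p1)) (Γ.upd x (.chan .void .void))
| vLl {Γ : Ctx} {x p N} : Γ x = some (.chan (.ep (.q .lin p)) N) →
    CheckVar Γ x (.ep (.q .lin p)) (Γ.upd x (.chan .void N))
| vLr {Γ : Ctx} {x p M} : Γ x = some (.chan M (.ep (.q .lin p))) →
    CheckVar Γ x (.ep (.q .lin p)) (Γ.upd x (.chan M .void))
| vUUl {Γ : Ctx} {x p1 p2} : Γ x = some (.chan (.ep (.q .un p1)) (.ep (.q .un p2))) →
    CheckVar Γ x (.ch (.q .un p1) (.q .un p2)) Γ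
| vUUr {Γ : Ctx} {x p1 p2} : Γ x = some (.chan (.ep (.q .un p1)) (.ep (.q .un p2))) →
    CheckVar Γ x (.ch (.q .un p2) (.q .un p1)) Γ
| vUl {Γ : Ctx} {x p N} : Γ x = some (.chan (.ep (.q .un p)) N) → N ≠ .ep (.q .un p) →
    CheckVar Γ x (.ep (.q .un p)) Γ
| vUr {Γ : Ctx} {x p M} : Γ x = some (.chan M (.ep (.q .un p))) → M ≠ .ep (.q .un p) →
    CheckVar Γ x (.ep (.q .un p)) Γ
| vEE {Γ : Ctx} {x} : Γ x = some (.chan unEnd unEnd) →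
    CheckVar Γ x (.ep (.q .un .ende)) Γ

/-- Algorithmic process-checking judgment Γ₁ ⊢ P ▷ Γ₂. -/
inductive Check : Ctx → Proc → Ctx → Prop
| inact (Γ : Ctx) : Check Γ .nil Γ
| par {Γ1 Γ2 Γ3 : Ctx} {P Q} : Check Γ1 P Γ2 → Check Γ2 Q Γ3 →
    Check Γ1 (.par P Q) Γ3
| repl {Γ : Ctx} {P} : Check Γ P Γ → Check Γ (.repl P) Γ
| res {Γ1 Γ2 : Ctx} {y T P O} : SafeC (Ty.toC T) → Γ1 y = none →
    Check (Γ1.upd y T.toC) P Γ2 → Γ2 y = some O → UnC O →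
    Check Γ1 (.nu y T P) (Γ2.del y)
| outL {Γ1 Γ2 Γ3 : Ctx} {x y T S P M} :
    Γ1 x = some (.single (.ep (.q .lin (.send T S)))) →
    CheckVar (Γ1.upd x (.single .void)) y T Γ2 →
    Check (Γ2.upd x (.single (.ep S))) P Γ3 →
    Γ3 x = some (.single M) → UnE M →
    Check Γ1 (.out x y P) (Γ3.upd x (.single .void))
| outLl {Γ1 Γ2 : Ctx} {x y T S N P} :
    Γ1 x = some (.chan (.ep (.q .lin (.send T S))) N) →
    Check (Γ1.upd x (.single (.ep (.q .lin (.send T S))))) (.out x y P) Γ2 →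
    Γ2 x = some (.single .void) →
    Check Γ1 (.out x y P) (Γ2.upd x (.chan .void N))
| outLr {Γ1 Γ2 : Ctx} {x y T S M P} :
    Γ1 x = some (.chan M (.ep (.q .lin (.send T S)))) →
    Check (Γ1.upd x (.single (.ep (.q .lin (.send T S))))) (.out x y P) Γ2 →
    Γ2 x = some (.single .void) →
    Check Γ1 (.out x y P) (Γ2.upd x (.chan M .void))
| outUn {Γ1 Γ2 Γ3 : Ctx} {x y T S P} :
    Γ1 x = some (.single (.ep S)) → Unf S (.q .un (.send T S)) →
    CheckVar Γ1 y T Γ2 → Check Γ2 P Γ3 →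
    Check Γ1 (.out x y P) Γ3
| outUnl {Γ1 Γ2 Γ3 : Ctx} {x y T S N P} :
    Γ1 x = some (.chan (.ep S) N) → Unf S (.q .un (.send T S)) →
    CheckVar Γ1 y T Γ2 → Check Γ2 P Γ3 →
    Check Γ1 (.out x y P) Γ3
| outUnr {Γ1 Γ2 Γ3 : Ctx} {x y T S M P} :
    Γ1 x = some (.chan M (.ep S)) → Unf S (.q .un (.send T S)) →
    CheckVar Γ1 y T Γ2 → Check Γ2 P Γ3 →
    Check Γ1 (.out x y P) Γ3
| inL {Γ1 Γ2 : Ctx} {x y T S P M O} :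
    Γ1 x = some (.single (.ep (.q .lin (.recv T S)))) → Γ1 y = none →
    Check ((Γ1.upd x (.single (.ep S))).upd y T.toC) P Γ2 →
    Γ2 x = some (.single M) → UnE M → Γ2 y = some O → UnC O →
    Check Γ1 (.inp x y P) ((Γ2.del y).upd x (.single .void))
| inLl {Γ1 Γ2 : Ctx} {x y T S N P} :
    Γ1 x = some (.chan (.ep (.q .lin (.recv T S))) N) →
    Check (Γ1.upd x (.single (.ep (.q .lin (.recv T S))))) (.inp x y P) Γ2 →
    Γ2 x = some (.single .void) →
    Check Γ1 (.inp x y P) (Γ2.upd x (.chan .void N))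
| inLr {Γ1 Γ2 : Ctx} {x y T S M P} :
    Γ1 x = some (.chan M (.ep (.q .lin (.recv T S)))) →
    Check (Γ1.upd x (.single (.ep (.q .lin (.recv T S))))) (.inp x y P) Γ2 →
    Γ2 x = some (.single .void) →
    Check Γ1 (.inp x y P) (Γ2.upd x (.chan M .void))
| inUn {Γ1 Γ2 : Ctx} {x y T S P O} :
    Γ1 x = some (.single (.ep S)) → Unf S (.q .un (.recv T S)) → Γ1 y = none →
    Check (Γ1.upd y T.toC) P Γ2 → Γ2 y = some O → UnC O →
    Check Γ1 (.inp x y P) (Γ2.del y)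
| inUnl {Γ1 Γ2 : Ctx} {x y T S N P O} :
    Γ1 x = some (.chan (.ep S) N) → Unf S (.q .un (.recv T S)) → Γ1 y = none →
    Check (Γ1.upd y T.toC) P Γ2 → Γ2 y = some O → UnC O →
    Check Γ1 (.inp x y P) (Γ2.del y)
| inUnr {Γ1 Γ2 : Ctx} {x y T S M P O} :
    Γ1 x = some (.chan M (.ep S)) → Unf S (.q .un (.recv T S)) → Γ1 y = none →
    Check (Γ1.upd y T.toC) P Γ2 → Γ2 y = some O → UnC O →
    Check Γ1 (.inp x y P) (Γ2.del y)

/-- One step of the algorithm: check(Γ,P) directly invokes check(Γ',P'). -/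
inductive Invokes : Ctx → Proc → Ctx → Proc → Prop
| par1 {Γ : Ctx} (P Q) : Invokes Γ (.par P Q) Γ P
| par2 {Γ Γ2 : Ctx} {P} (Q) : Check Γ P Γ2 → Invokes Γ (.par P Q) Γ2 Q
| repl {Γ : Ctx} (P) : Invokes Γ (.repl P) Γ P
| res {Γ : Ctx} {y T P} : SafeC (Ty.toC T) → Γ y = none →
    Invokes Γ (.nu y T P) (Γ.upd y T.toC) P
| outL {Γ Γ2 : Ctx} {x y T S P} :
    Γ x = some (.single (.ep (.q .lin (.send T S)))) →
    CheckVar (Γ.upd x (.single .void)) y T Γ2 →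
    Invokes Γ (.out x y P) (Γ2.upd x (.single (.ep S))) P
| outLl {Γ : Ctx} {x y T S N P} :
    Γ x = some (.chan (.ep (.q .lin (.send T S))) N) →
    Invokes Γ (.out x y P) (Γ.upd x (.single (.ep (.q .lin (.send T S))))) (.out x y P)
| outLr {Γ : Ctx} {x y T S M P} :
    Γ x = some (.chan M (.ep (.q .lin (.send T S)))) →
    Invokes Γ (.out x y P) (Γ.upd x (.single (.ep (.q .lin (.send T S))))) (.out x y P)
| outUn {Γ Γ2 : Ctx} {x y T S P} :
    Γ x = some (.single (.ep S)) → Unf S (.q .un (.send T S)) →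
    CheckVar Γ y T Γ2 → Invokes Γ (.out x y P) Γ2 P
| outUnl {Γ Γ2 : Ctx} {x y T S N P} :
    Γ x = some (.chan (.ep S) N) → Unf S (.q .un (.send T S)) →
    CheckVar Γ y T Γ2 → Invokes Γ (.out x y P) Γ2 P
| outUnr {Γ Γ2 : Ctx} {x y T S M P} :
    Γ x = some (.chan M (.ep S)) → Unf S (.q .un (.send T S)) →
    CheckVar Γ y T Γ2 → Invokes Γ (.out x y P) Γ2 P
| inL {Γ : Ctx} {x y T S P} :
    Γ x = some (.single (.ep (.q .lin (.recv T S)))) → Γ y = none →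
    Invokes Γ (.inp x y P) ((Γ.upd x (.single (.ep S))).upd y T.toC) P
| inLl {Γ : Ctx} {x y T S N P} :
    Γ x = some (.chan (.ep (.q .lin (.recv T S))) N) →
    Invokes Γ (.inp x y P) (Γ.upd x (.single (.ep (.q .lin (.recv T S))))) (.inp x y P)
| inLr {Γ : Ctx} {x y T S M P} :
    Γ x = some (.chan M (.ep (.q .lin (.recv T S)))) →
    Invokes Γ (.inp x y P) (Γ.upd x (.single (.ep (.q .lin (.recv T S))))) (.inp x y P)
| inUn {Γ : Ctx} {x y T S P} :
    Γ x = some (.single (.ep S)) → Unf S (.q .un (.recv T S)) → Γ y = none →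
    Invokes Γ (.inp x y P) (Γ.upd y T.toC) P
| inUnl {Γ : Ctx} {x y T S N P} :
    Γ x = some (.chan (.ep S) N) → Unf S (.q .un (.recv T S)) → Γ y = none →
    Invokes Γ (.inp x y P) (Γ.upd y T.toC) P
| inUnr {Γ : Ctx} {x y T S M P} :
    Γ x = some (.chan M (.ep S)) → Unf S (.q .un (.recv T S)) → Γ y = none →
    Invokes Γ (.inp x y P) (Γ.upd y T.toC) P

/-- check(Γ',P') is (reflexively-transitively) invoked during check(Γ,P). -/
def Reaches : Ctx × Proc → Ctx × Proc → Prop :=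
  Relation.ReflTransGen (fun a b => Invokes a.1 a.2 b.1 b.2)

/-! ### The split-based declarative system ⊢_D -/

abbrev DCtx := String → Option Ty

def DCtx.upd (I : DCtx) (x : String) (T : Ty) : DCtx :=
  fun y => if y = x then some T else I y

def UnT : Ty → Prop
| .ep (.q .un _) => True
| .ch (.q .un _) (.q .un _) => True
| _ => False

def UnD (I : DCtx) : Prop := ∀ x T, I x = some T → UnT T

/-- Context-splitting, entrywise. -/
inductive SplitE : Option Ty → Option Ty → Option Ty → Prop
| none : SplitE none none none
| unEp (p) : SplitE (some (.ep (.q .un p))) (some (.ep (.q .un p))) (some (.ep (.q .un p)))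
| unCh (p1 p2) : SplitE (some (.ch (.q .un p1) (.q .un p2)))
    (some (.ch (.q .un p1) (.q .un p2))) (some (.ch (.q .un p1) (.q .un p2)))
| linEpL (p) : SplitE (some (.ep (.q .lin p))) (some (.ep (.q .lin p))) none
| linEpR (p) : SplitE (some (.ep (.q .lin p))) none (some (.ep (.q .lin p)))
| linChL (p1 p2) : SplitE (some (.ch (.q .lin p1) (.q .lin p2)))
    (some (.ch (.q .lin p1) (.q .lin p2))) none
| linChR (p1 p2) : SplitE (some (.ch (.q .lin p1) (.q .lin p2)))
    none (some (.ch (.q .lin p1) (.q .lin p2)))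
| chSplit (p1 p2) : SplitE (some (.ch (.q .lin p1) (.q .lin p2)))
    (some (.ep (.q .lin p1))) (some (.ep (.q .lin p2)))
| mixL (p1 p2) : SplitE (some (.ch (.q .lin p1) (.q .un p2)))
    (some (.ch (.q .lin p1) (.q .un p2))) (some (.ep (.q .un p2)))
| mixR (p1 p2) : SplitE (some (.ch (.q .lin p1) (.q .un p2)))
    (some (.ep (.q .un p2))) (some (.ch (.q .lin p1) (.q .un p2)))

def DSplit (I I1 I2 : DCtx) : Prop := ∀ x, SplitE (I x) (I1 x) (I2 x)

/-- Declarative value typing. -/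
inductive DVal : DCtx → String → Ty → Prop
| var {I : DCtx} {x T} : I x = some T →
    (∀ y T', y ≠ x → I y = some T' → UnT T') → DVal I x T
| strength {I : DCtx} {v S p} : DVal I v (.ch S (.q .un p)) → DVal I v (.ep S)

/-- Declarative process typing I ⊢_D P. -/
inductive DTy : DCtx → Proc → Prop
| inact {I : DCtx} : UnD I → DTy I .nil
| par {I I1 I2 : DCtx} {P Q} : DSplit I I1 I2 → DTy I1 P → DTy I2 Q →
    DTy I (.par P Q)
| repl {I : DCtx} {P} : DTy I P → UnD I → DTy I (.repl P)
| res {I : DCtx} {x T P} : I x = none → SafeC (Ty.toC T) →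
    DTy (I.upd x T) P → DTy I (.nu x T P)
| inn {I : DCtx} {x y S0 qu T S P} :
    I x = some (.ep S0) → Unf S0 (.q qu (.recv T S)) → (qu = .un → S = S0) →
    I y = none → DTy ((I.upd x (.ep S)).upd y T) P →
    DTy I (.inp x y P)
| out {I I1 I2 : DCtx} {x y S0 qu T S P} :
    DSplit I I1 I2 → DVal I1 y T →
    I2 x = some (.ep S0) → Unf S0 (.q qu (.send T S)) → (qu = .un → S = S0) →
    DTy (I2.upd x (.ep S)) P →
    DTy I (.out x y P)
| innC {I : DCtx} {x y S0 S' qu T S P} :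
    I x = some (.ch S0 S') → Unf S0 (.q qu (.recv T S)) → (qu = .un → S = S0) →
    I y = none → DTy ((I.upd x (.ch S S')).upd y T) P →
    DTy I (.inp x y P)
| outC {I I1 I2 : DCtx} {x y S0 S' qu T S P} :
    DSplit I I1 I2 → DVal I1 y T →
    I2 x = some (.ch S0 S') → Unf S0 (.q qu (.send T S)) → (qu = .un → S = S0) →
    DTy (I2.upd x (.ch S S')) P →
    DTy I (.out x y P)

/-! ### Used closure, used map, nabla, and update -/

/-- The partial used-closure operation on entries, as a relation. -/
inductive ClosE : Entry → Entry → Entry → Prop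
| vv : ClosE .void .void .void
| ll (p) : ClosE (.ep (.q .lin p)) (.ep (.q .lin p)) .void
| lv (p) : ClosE (.ep (.q .lin p)) .void (.ep (.q .lin p))
| uu (p) : ClosE (.ep (.q .un p)) (.ep (.q .un p)) (.ep (.q .un p))

inductive ClosC : CEntry → CEntry → CEntry → Prop
| single {M M' O} : ClosE M M' O → ClosC (.single M) (.single M') (.single O)
| chan {M M' N N' O O'} : ClosE M M' O → ClosE N N' O' →
    ClosC (.chan M N) (.chan M' N') (.chan O O')

/-- Δ is the used closure Γ₁ ▷ Γ₂ of contexts (defined pointwise). -/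
def ClosCtx (Γ1 Γ2 Δ : Ctx) : Prop :=
  ∀ x, (Γ1 x = none ∧ Γ2 x = none ∧ Δ x = none) ∨
    ∃ E E' O, Γ1 x = some E ∧ Γ2 x = some E' ∧ ClosC E E' O ∧ Δ x = some O

def Entry.used : Entry → EpTy
| .void => .q .un .ende
| .ep S => S

def CEntry.used : CEntry → Ty
| .single M => .ep M.used
| .chan M N => .ch M.used N.used

/-- Project an algorithmic context to a declarative one via used. -/
def usedCtx (Δ : Ctx) : DCtx := fun x => (Δ x).map CEntry.used

def Entry.isLin : Entry → Bool
| .ep (.q .lin _) => true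
| _ => false

def Entry.isVoid : Entry → Bool
| .void => true
| _ => false

/-- The ∇ operation on entries. -/
def CEntry.nabla : CEntry → CEntry
| .single M => if M.isLin then .single .void else .single M
| .chan M N =>
    if (M.isLin && (N.isLin || N.isVoid)) || (N.isLin && M.isVoid)
    then .chan .void .void else .chan M N

def nablaCtx (Γ : Ctx) : Ctx := fun x => (Γ x).map CEntry.nabla

/-- The (partial) void-filling update ⊎ on entries, as a relation. -/
inductive UpdE : Entry → Entry → Entry → Prop
| void (M) : UpdE .void M M
| same (M) : UpdE M M M

inductive UpdC : CEntry → CEntry → CEntry → Prop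
| single {M N O} : UpdE M N O → UpdC (.single M) (.single N) (.single O)
| chan {M1 M2 M N1 N2 N} : UpdE M1 M2 M → UpdE N1 N2 N →
    UpdC (.chan M1 N1) (.chan M2 N2) (.chan M N)

/-- Δ = Γ₁ ⊎ Γ (pointwise update of contexts). -/
def UpdCtx (Γ1 Γ Δ : Ctx) : Prop :=
  ∀ x, (Γ1 x = none ∧ Γ x = none ∧ Δ x = none) ∨
    ∃ E E' O, Γ1 x = some E ∧ Γ x = some E' ∧ UpdC E E' O ∧ Δ x = some O

/-- Structural congruence. -/
inductive SC : Proc → Proc → Prop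
| comm (P Q) : SC (.par P Q) (.par Q P)
| assoc (P Q R) : SC (.par (.par P Q) R) (.par P (.par Q R))
| parNil (P) : SC (.par P .nil) P
| replUnfold (P) : SC (.repl P) (.par P (.repl P))
| extrude {x T P Q} : x ∉ fv Q → SC (.par (.nu x T P) Q) (.nu x T (.par P Q))
| exch (x T1 y T2 P) : SC (.nu x T1 (.nu y T2 P)) (.nu y T2 (.nu x T1 P))
| nuNilEp (x p) : SC (.nu x (.ep (.q .un p)) .nil) .nil
| nuNilCh (x p1 p2) : SC (.nu x (.ch (.q .un p1) (.q .un p2)) .nil) .nil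
| refl (P) : SC P P
| symm {P Q} : SC P Q → SC Q P
| trans {P Q R} : SC P Q → SC Q R → SC P R
| parCong {P P' Q Q'} : SC P P' → SC Q Q' → SC (.par P Q) (.par P' Q')
| replCong {P P'} : SC P P' → SC (.repl P) (.repl P')
| nuCong {P P'} (x T) : SC P P' → SC (.nu x T P) (.nu x T P')
| outCong {P P'} (x y) : SC P P' → SC (.out x y P) (.out x y P')
| inpCong {P P'} (x y) : SC P P' → SC (.inp x y P) (.inp x y P')

/-! Every step of the algorithm either leaves the context alone, overwrites an existing entry
by a single entry or by a channel entry with a void end (both safe by definition), or binds a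
fresh variable that is deleted again when the step finishes. Hence the domain and the safety
of each entry are preserved variable by variable. Safety has to be tracked pointwise: the
entry `T.toC` bound by an input need not be safe, so the intermediate contexts need not be. -/

def Ctx.SafeAt (Γ : Ctx) (z : String) : Prop := ∀ E, Γ z = some E → SafeC E

def Ctx.Preserves (Γ Γ' : Ctx) : Prop :=
  ∀ z, (Γ z = none ↔ Γ' z = none) ∧ (Γ.SafeAt z → Γ'.SafeAt z)

namespace Ctx.Preserves

variable {Γ Γ' Γ'' : Ctx}

theorem refl (Γ : Ctx) : Γ.Preserves Γ := fun _ => ⟨Iff.rfl, id⟩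

theorem trans (h : Γ.Preserves Γ') (h' : Γ'.Preserves Γ'') : Γ.Preserves Γ'' :=
  fun z => ⟨(h z).1.trans (h' z).1, (h' z).2 ∘ (h z).2⟩

theorem upd (h : Γ.Preserves Γ') {x : String} {E₀ : CEntry} (hx : Γ x = some E₀) {E : CEntry}
    (hE : SafeC E) : Γ.Preserves (Γ'.upd x E) := by
  intro z
  by_cases hz : z = x
  · subst hz
    refine ⟨by simp [Ctx.upd, hx], fun _ F hF => ?_⟩
    obtain rfl : E = F := by simpa [Ctx.upd] using hF
    exact hE
  · simpa only [Ctx.SafeAt, Ctx.upd, if_neg hz] using h z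

theorem del_of_upd {y : String} (hy : Γ y = none) {E : CEntry}
    (h : (Γ.upd y E).Preserves Γ') : Γ.Preserves (Γ'.del y) := by
  intro z
  by_cases hz : z = y
  · subst hz
    exact ⟨by simp [Ctx.del, hy], fun _ F hF => by simp [Ctx.del] at hF⟩
  · simpa only [Ctx.SafeAt, Ctx.del, Ctx.upd, if_neg hz] using h z

end Ctx.Preserves

open Ctx

theorem Ctx.preserves_upd {Γ : Ctx} {x : String} {E₀ : CEntry} (hx : Γ x = some E₀) {E : CEntry}
    (hE : SafeC E) : Γ.Preserves (Γ.upd x E) :=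
  (Preserves.refl Γ).upd hx hE

theorem CheckVar.preserves {Γ Γ' : Ctx} {x : String} {T : Ty} (h : CheckVar Γ x T Γ') :
    Γ.Preserves Γ' := by
  cases h <;> first
    | exact Preserves.refl _
    | exact preserves_upd (by assumption) (by constructor)

theorem Check.preserves {Γ Γ' : Ctx} {P : Proc} (h : Check Γ P Γ') : Γ.Preserves Γ' := by
  induction h with
  | inact Γ => exact Preserves.refl Γ
  | par _ _ ihP ihQ => exact ihP.trans ihQ
  | repl _ ih => exact ih
  | res _ hy _ _ _ ih => exact Preserves.del_of_upd hy ih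
  | outL hx hv _ _ _ ih =>
    exact (((preserves_upd hx (.single _)).trans hv.preserves).upd hx (.single _)).trans ih
      |>.upd hx (.single _)
  | outLl hx _ _ ih | inLl hx _ _ ih =>
    exact ((preserves_upd hx (.single _)).trans ih).upd hx (.voidL _)
  | outLr hx _ _ ih | inLr hx _ _ ih =>
    exact ((preserves_upd hx (.single _)).trans ih).upd hx (.voidR _)
  | outUn _ _ hv _ ih | outUnl _ _ hv _ ih | outUnr _ _ hv _ ih => exact hv.preserves.trans ih
  | @inL Γ1 _ x y _ S _ _ _ hx hy _ _ _ _ _ ih =>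
    have hyx : y ≠ x := by rintro rfl; simp [hx] at hy
    have hy : (Γ1.upd x (.single (.ep S))) y = none := by simpa [Ctx.upd, hyx] using hy
    exact ((preserves_upd hx (.single _)).trans (Preserves.del_of_upd hy ih)).upd hx (.single _)
  | inUn _ _ hy _ _ _ ih | inUnl _ _ hy _ _ _ ih | inUnr _ _ hy _ _ _ ih =>
    exact Preserves.del_of_upd hy ih

/-- domain preservation and safety preservation of the algorithm. -/
theorem stmt0 {Γ1 Γ2 : Ctx} {P : Proc} (h1 : SafeCtx Γ1) (h2 : Check Γ1 P Γ2) :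
    (∀ x, Γ1 x = none ↔ Γ2 x = none) ∧ SafeCtx Γ2 :=
  ⟨fun x => (h2.preserves x).1, fun x => (h2.preserves x).2 (h1 x)⟩
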